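/- Let N ≥ 1 and let V = {0,…,N−1}² be the grid with its adjacency. Let S' and P' be disjoint subsets with S' ∪ P' = V. If some connected component of S' has bounding rectangle equal to all of V, then no connected component of P' has bounding rectangle equal to all of V. -/

import Mathlib

/-- The vertices of the `N × N` grid `{0,…,N−1}²`. -/
abbrev GridV (N : ℕ) : Type := Fin N × Fin N

/-- Grid adjacency: two vertices are adjacent when they differ by exactly `1` in exactly one
coordinate. -/
def Adj {N : ℕ} (u w : GridV N) : Prop :=
  (u.1 = w.1 ∧ ((u.2 : ℕ) + 1 = (w.2 : ℕ) ∨ (w.2 : ℕ) + 1 = (u.2 : ℕ))) ∨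
  (u.2 = w.2 ∧ ((u.1 : ℕ) + 1 = (w.1 : ℕ) ∨ (w.1 : ℕ) + 1 = (u.1 : ℕ)))

instance {N : ℕ} (u w : GridV N) : Decidable (Adj u w) := by unfold Adj; infer_instance

/-- Membership in the `c × c` square subgrid with bottom-left corner `(x0, y0)`. -/
def inSquare {N : ℕ} (x0 y0 c : ℕ) (v : GridV N) : Prop :=
  x0 ≤ (v.1 : ℕ) ∧ (v.1 : ℕ) < x0 + c ∧ y0 ≤ (v.2 : ℕ) ∧ (v.2 : ℕ) < y0 + c

instance {N : ℕ} (x0 y0 c : ℕ) (v : GridV N) : Decidable (inSquare x0 y0 c v) := by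
  unfold inSquare; infer_instance

/-- Super-tile capacity data on the `N × N` grid: functions `a b : V → ℕ` with equal totals
such that the sum of `a` (resp. `b`) over every `c × c` square subgrid is at most `ρ·c`.
(This encodes the flow graph of a super-tile: a source `s` with an arc of capacity `a v` into
each grid vertex `v`, arcs of capacity `ρ` in both directions between adjacent grid vertices,
and `b v` parallel unit-capacity arcs from each grid vertex `v` to a sink `p`.) -/
structure CapacityData (N ρ : ℕ) where
  a : GridV N → ℕ
  b : GridV N → ℕ
  total_eq : ∑ v, a v = ∑ v, b v
  a_square : ∀ c x0 y0 : ℕ, 1 ≤ c → x0 + c ≤ N → y0 + c ≤ N →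
    ∑ v ∈ Finset.univ.filter (inSquare x0 y0 c), a v ≤ ρ * c
  b_square : ∀ c x0 y0 : ℕ, 1 ≤ c → x0 + c ≤ N → y0 + c ≤ N →
    ∑ v ∈ Finset.univ.filter (inSquare x0 y0 c), b v ≤ ρ * c

/-- The total value `F = Σ_v a v (= Σ_v b v)` of capacity data. -/
def CapacityData.F {N ρ : ℕ} (d : CapacityData N ρ) : ℕ := ∑ v, d.a v

/-- `C` is a connected component of `X` (with respect to grid adjacency restricted to `X`):
`C` is the set of vertices reachable from some `v ∈ X` by paths staying inside `X`. -/
def IsComponent {N : ℕ} (X C : Finset (GridV N)) : Prop :=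
  ∃ v ∈ X, ∀ w : GridV N,
    w ∈ C ↔ Relation.ReflTransGen (fun p q => p ∈ X ∧ q ∈ X ∧ Adj p q) v w

/-- The bounding rectangle of `C` is all of the grid: `C` touches all four sides. -/
def FullBoundingRect {N : ℕ} (C : Finset (GridV N)) : Prop :=
  (∃ v ∈ C, (v.1 : ℕ) = 0) ∧ (∃ v ∈ C, (v.1 : ℕ) = N - 1) ∧
  (∃ v ∈ C, (v.2 : ℕ) = 0) ∧ (∃ v ∈ C, (v.2 : ℕ) = N - 1)

/-!
Take a walk in `S'` from the right side of the grid to its left side and prolong it by one step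
to the right: this gives a lattice walk `γ` in `ℤ²` from column `N` to column `0`. For a lattice
point `z` off `γ`, let `δ z` be the parity of the number of steps of `γ` crossing the downward
half-line `{z.1 + ½} × (-∞, z.2]`. Moving `z` up to a point off `γ` does not change `δ`. Neither
does moving it right: along any walk, `δ z` plus the parity of crossings of the leftward half-line
`(-∞, z.1] × {z.2 + ½}` telescopes to the quadrant indicators of the endpoints, which lie in
columns `0` and `N`, and the leftward parity only sees the point `z + (1, 0)`. So `δ` is constant
on each component of `P'`. But `δ = 0` on the bottom row, since no step of `γ` passes below it,
and `δ = 1` on the top row, since `γ` lies weakly below it and runs from the right of the column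
to its left; hence no component of `P'` meets both rows.
-/

namespace List

variable {α M : Type*}

def stepSum [AddCommMonoid M] (f : α → α → M) : List α → M
  | p :: q :: l => f p q + stepSum f (q :: l)
  | _ => 0

@[simp]
theorem stepSum_cons_cons [AddCommMonoid M] (f : α → α → M) (p q : α) (l : List α) :
    stepSum f (p :: q :: l) = f p q + stepSum f (q :: l) := rfl

@[simp]
theorem stepSum_nil [AddCommMonoid M] (f : α → α → M) : stepSum f [] = 0 := rfl

@[simp]
theorem stepSum_singleton [AddCommMonoid M] (f : α → α → M) (p : α) :
    stepSum f [p] = 0 := rfl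

theorem stepSum_congr [AddCommMonoid M] {f g : α → α → M} {l : List α}
    (h : ∀ p ∈ l, ∀ q ∈ l, f p q = g p q) : stepSum f l = stepSum g l := by
  induction l using twoStepInduction with
  | nil => rfl
  | singleton p => rfl
  | cons_cons p q l _ ih =>
    simp only [stepSum_cons_cons]
    rw [h p (by simp) q (by simp),
      ih q fun a ha b hb => h a (mem_cons_of_mem _ ha) b (mem_cons_of_mem _ hb)]

@[simp]
theorem stepSum_zero [AddCommMonoid M] (l : List α) : stepSum (fun _ _ => (0 : M)) l = 0 := by
  induction l using twoStepInduction <;> simp_all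

theorem stepSum_add [AddCommMonoid M] (f g : α → α → M) (l : List α) :
    stepSum (fun p q => f p q + g p q) l = stepSum f l + stepSum g l := by
  induction l using twoStepInduction with
  | nil => simp
  | singleton p => simp
  | cons_cons p q l _ ih => simp only [stepSum_cons_cons, ih q]; abel

theorem stepSum_eq_sub_of_isChain [AddCommGroup M] {r : α → α → Prop} {f : α → α → M}
    {g : α → M} (hfg : ∀ p q, r p q → f p q = g q - g p) {a : α} {l : List α}
    (hl : (a :: l).IsChain r) :
    stepSum f (a :: l) = g ((a :: l).getLast (cons_ne_nil a l)) - g a := by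
  induction l generalizing a with
  | nil => simp
  | cons b l ih =>
    rw [isChain_cons_cons] at hl
    rw [stepSum_cons_cons, ih hl.2, hfg a b hl.1, getLast_cons_cons]
    abel

end List

namespace IntGrid

open List

def Adj (p q : ℤ × ℤ) : Prop :=
  (p.1 = q.1 ∧ (p.2 + 1 = q.2 ∨ q.2 + 1 = p.2)) ∨
  (p.2 = q.2 ∧ (p.1 + 1 = q.1 ∨ q.1 + 1 = p.1))

/- `crossesCol x` and `crossesRow y` detect unit steps crossing the line `x + ½`, resp. `y + ½`;
`crossesBelow z` and `crossesLeft z` detect those crossing the half-lines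
`{z.1 + ½} × (-∞, z.2]` and `(-∞, z.1] × {z.2 + ½}`. -/
def crossesCol (x : ℤ) (p q : ℤ × ℤ) : ZMod 2 :=
  if p.2 = q.2 ∧ (p.1 = x ∧ q.1 = x + 1 ∨ q.1 = x ∧ p.1 = x + 1) then 1 else 0

def crossesRow (y : ℤ) (p q : ℤ × ℤ) : ZMod 2 :=
  if p.1 = q.1 ∧ (p.2 = y ∧ q.2 = y + 1 ∨ q.2 = y ∧ p.2 = y + 1) then 1 else 0

def crossesBelow (z p q : ℤ × ℤ) : ZMod 2 := if p.2 ≤ z.2 then crossesCol z.1 p q else 0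

def crossesLeft (z p q : ℤ × ℤ) : ZMod 2 := if p.1 ≤ z.1 then crossesRow z.2 p q else 0

def leftIndicator (x : ℤ) (p : ℤ × ℤ) : ZMod 2 := if p.1 ≤ x then 1 else 0

def quadrantIndicator (z p : ℤ × ℤ) : ZMod 2 := if p.1 ≤ z.1 ∧ p.2 ≤ z.2 then 1 else 0

theorem not_eq_and_eq_of_mem_of_not_mem {p : ℤ × ℤ} {l : List (ℤ × ℤ)} {x y : ℤ} (hp : p ∈ l)
    (h : (x, y) ∉ l) : ¬(p.1 = x ∧ p.2 = y) :=
  fun e => h (by rwa [← e.1, ← e.2])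

theorem crossesCol_eq_sub {p q : ℤ × ℤ} (h : Adj p q) (x : ℤ) :
    crossesCol x p q = leftIndicator x q - leftIndicator x p := by
  unfold crossesCol leftIndicator
  rcases h with h | h <;> split_ifs <;> first | rfl | decide | omega

theorem crossesBelow_add_crossesLeft {p q : ℤ × ℤ} (h : Adj p q) (z : ℤ × ℤ) :
    crossesBelow z p q + crossesLeft z p q = quadrantIndicator z q - quadrantIndicator z p := by
  unfold crossesBelow crossesLeft crossesCol crossesRow quadrantIndicator
  rcases h with h | h <;> split_ifs <;> first | rfl | decide | omega

theorem stepSum_crossesBelow_eq_one {a : ℤ × ℤ} {l : List (ℤ × ℤ)}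
    (hl : (a :: l).IsChain Adj)
    {z : ℤ × ℤ} (hz : ∀ p ∈ a :: l, p.2 ≤ z.2) (ha : z.1 < a.1)
    (hlast : ((a :: l).getLast (cons_ne_nil a l)).1 ≤ z.1) :
    stepSum (crossesBelow z) (a :: l) = 1 := by
  rw [stepSum_congr (f := crossesBelow z) (g := crossesCol z.1)
      fun p hp q _ => if_pos (hz p hp),
    stepSum_eq_sub_of_isChain (r := Adj) (fun _ _ h => crossesCol_eq_sub h z.1) hl,
    leftIndicator, leftIndicator, if_pos hlast, if_neg (not_le.2 ha), sub_zero]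

theorem stepSum_crossesBelow_eq_zero {l : List (ℤ × ℤ)} {z : ℤ × ℤ} (hz : z ∉ l)
    (hl : ∀ p ∈ l, z.2 ≤ p.2) : stepSum (crossesBelow z) l = 0 := by
  rw [← stepSum_zero l]
  refine stepSum_congr fun p hp q hq => ?_
  have hpz := not_eq_and_eq_of_mem_of_not_mem (x := z.1) (y := z.2) hp hz
  have hqz := not_eq_and_eq_of_mem_of_not_mem (x := z.1) (y := z.2) hq hz
  have := hl p hp
  unfold crossesBelow crossesCol
  split_ifs <;> first | rfl | omega

theorem stepSum_crossesBelow_add_snd {l : List (ℤ × ℤ)} {x y : ℤ} (h : (x, y + 1) ∉ l) :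
    stepSum (crossesBelow (x, y)) l = stepSum (crossesBelow (x, y + 1)) l := by
  refine stepSum_congr fun p hp q hq => ?_
  have hp' := not_eq_and_eq_of_mem_of_not_mem hp h
  have hq' := not_eq_and_eq_of_mem_of_not_mem hq h
  unfold crossesBelow crossesCol
  split_ifs <;> first | rfl | omega

theorem stepSum_crossesLeft_add_fst {l : List (ℤ × ℤ)} {x y : ℤ} (h : (x + 1, y) ∉ l) :
    stepSum (crossesLeft (x, y)) l = stepSum (crossesLeft (x + 1, y)) l := by
  refine stepSum_congr fun p hp q hq => ?_
  have hp' := not_eq_and_eq_of_mem_of_not_mem hp h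
  have hq' := not_eq_and_eq_of_mem_of_not_mem hq h
  unfold crossesLeft crossesRow
  split_ifs <;> first | rfl | omega

theorem quadrantIndicator_add_fst {p : ℤ × ℤ} {x : ℤ} (h : p.1 ≠ x + 1) (y : ℤ) :
    quadrantIndicator (x + 1, y) p = quadrantIndicator (x, y) p := by
  unfold quadrantIndicator
  split_ifs <;> first | rfl | omega

theorem stepSum_crossesBelow_add_fst {a : ℤ × ℤ} {l : List (ℤ × ℤ)}
    (hl : (a :: l).IsChain Adj)
    {x y : ℤ} (h : (x + 1, y) ∉ a :: l) (ha : a.1 ≠ x + 1)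
    (hlast : ((a :: l).getLast (cons_ne_nil a l)).1 ≠ x + 1) :
    stepSum (crossesBelow (x, y)) (a :: l) = stepSum (crossesBelow (x + 1, y)) (a :: l) := by
  have key : ∀ z, stepSum (crossesBelow z) (a :: l) + stepSum (crossesLeft z) (a :: l) =
      quadrantIndicator z ((a :: l).getLast (cons_ne_nil a l)) - quadrantIndicator z a :=
    fun z => (stepSum_add _ _ _).symm.trans
      (stepSum_eq_sub_of_isChain (r := Adj) (fun _ _ h => crossesBelow_add_crossesLeft h z) hl)
  have h₀ := key (x, y)
  have h₁ := key (x + 1, y)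
  rw [← stepSum_crossesLeft_add_fst h, quadrantIndicator_add_fst ha,
    quadrantIndicator_add_fst hlast] at h₁
  linear_combination h₀ - h₁

end IntGrid

section Grid

open List

variable {N : ℕ}

theorem Adj.symm {u w : GridV N} (h : Adj u w) : Adj w u := by
  rcases h with ⟨h₁, h₂⟩ | ⟨h₁, h₂⟩
  exacts [Or.inl ⟨h₁.symm, h₂.symm⟩, Or.inr ⟨h₁.symm, h₂.symm⟩]

def toIntPoint (u : GridV N) : ℤ × ℤ := ((u.1 : ℤ), (u.2 : ℤ))

theorem toIntPoint_injective : Function.Injective (toIntPoint (N := N)) := by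
  intro u w h
  simp only [toIntPoint, Prod.mk.injEq, Nat.cast_inj, Fin.val_inj] at h
  exact Prod.ext h.1 h.2

theorem Adj.intGrid {u w : GridV N} (h : Adj u w) :
    IntGrid.Adj (toIntPoint u) (toIntPoint w) := by
  simp only [Adj, Fin.ext_iff] at h
  simp only [IntGrid.Adj, toIntPoint]
  omega

theorem IsComponent.subset {X C : Finset (GridV N)} (hC : IsComponent X C) : C ⊆ X := by
  obtain ⟨v, hv, hC⟩ := hC
  intro w hw
  rcases ((hC w).1 hw).cases_tail with rfl | ⟨_, _, h⟩
  exacts [hv, h.2.1]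

theorem IsComponent.apply_eq_apply {α : Type*} {X C : Finset (GridV N)} (hC : IsComponent X C)
    {f : GridV N → α} (hf : ∀ p ∈ X, ∀ q ∈ X, Adj p q → f p = f q) {u w : GridV N}
    (hu : u ∈ C) (hw : w ∈ C) : f u = f w := by
  obtain ⟨v, -, hC⟩ := hC
  have key : ∀ w, Relation.ReflTransGen (fun p q => p ∈ X ∧ q ∈ X ∧ Adj p q) v w →
      f v = f w := by
    intro w h
    induction h with
    | refl => rfl
    | tail _ h ih => exact ih.trans (hf _ h.1 _ h.2.1 h.2.2)
  exact (key u ((hC u).1 hu)).symm.trans (key w ((hC w).1 hw))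

theorem IsComponent.exists_isChain {X C : Finset (GridV N)} (hC : IsComponent X C)
    {u w : GridV N} (hu : u ∈ C) (hw : w ∈ C) :
    ∃ l, (u :: l).IsChain Adj ∧ (u :: l).getLast (cons_ne_nil u l) = w ∧
      ∀ p ∈ u :: l, p ∈ X := by
  have huX := hC.subset hu
  obtain ⟨v, -, hC⟩ := hC
  have hvu := (hC u).1 hu
  have huv : Relation.ReflTransGen (fun p q => p ∈ X ∧ q ∈ X ∧ Adj p q) u v :=
    Relation.ReflTransGen.mono (fun _ _ h => ⟨h.2.1, h.1, h.2.2.symm⟩) _ _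
      (Relation.reflTransGen_swap.mpr hvu)
  obtain ⟨l, hl, hlast⟩ := exists_isChain_cons_of_relationReflTransGen (huv.trans ((hC w).1 hw))
  exact ⟨l, hl.imp fun _ _ h => h.2.2, hlast,
    forall_mem_cons.2 ⟨huX, hl.cons_induction _ _ (fun _ _ h _ => h.2.1) huX⟩⟩

theorem exists_intGrid_walk {u : GridV N} {l : List (GridV N)} (hl : (u :: l).IsChain Adj)
    (hu : (u.1 : ℕ) = N - 1) (hlast : (((u :: l).getLast (cons_ne_nil u l)).1 : ℕ) = 0) :
    ∃ a t, (a :: t).IsChain IntGrid.Adj ∧ a.1 = N ∧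
      ((a :: t).getLast (cons_ne_nil a t)).1 = 0 ∧ (∀ p ∈ a :: t, 0 ≤ p.2 ∧ p.2 < N) ∧
      ∀ v, toIntPoint v ∈ a :: t → v ∈ u :: l := by
  have hu' := u.1.isLt
  refine ⟨((N : ℤ), (u.2 : ℤ)), (u :: l).map toIntPoint, ?_, rfl, ?_, ?_, ?_⟩
  · rw [map_cons, isChain_cons_cons, ← map_cons, isChain_map]
    exact ⟨Or.inr ⟨rfl, Or.inr (by simp only [toIntPoint]; omega)⟩,
      hl.imp fun _ _ h => h.intGrid⟩
  · rw [getLast_cons (by simp), getLast_map]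
    simp only [toIntPoint, hlast, Nat.cast_zero]
  · intro p hp
    rcases mem_cons.1 hp with rfl | hp
    · simp only; omega
    · obtain ⟨v, -, rfl⟩ := mem_map.1 hp
      have := v.2.isLt
      simp only [toIntPoint]
      omega
  · intro v hv
    rcases mem_cons.1 hv with h | h
    · have := v.1.isLt
      simp only [toIntPoint, Prod.mk.injEq] at h
      omega
    · obtain ⟨w, hw, hwv⟩ := mem_map.1 h
      exact toIntPoint_injective hwv ▸ hw

theorem stepSum_crossesBelow_toIntPoint_eq {a : ℤ × ℤ} {t : List (ℤ × ℤ)}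
    (hl : (a :: t).IsChain IntGrid.Adj) (ha : a.1 = N)
    (hlast : ((a :: t).getLast (cons_ne_nil a t)).1 = 0) {u w : GridV N} (huw : Adj u w)
    (hu : toIntPoint u ∉ a :: t) (hw : toIntPoint w ∉ a :: t) :
    stepSum (IntGrid.crossesBelow (toIntPoint u)) (a :: t) =
      stepSum (IntGrid.crossesBelow (toIntPoint w)) (a :: t) := by
  have := u.1.isLt
  have := w.1.isLt
  simp only [Adj, Fin.ext_iff] at huw
  rcases huw with ⟨h₁, h₂ | h₂⟩ | ⟨h₁, h₂ | h₂⟩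
  · have e : toIntPoint w = ((u.1 : ℤ), (u.2 : ℤ) + 1) := by
      simp only [toIntPoint, Prod.mk.injEq]; omega
    rw [e] at hw ⊢
    exact IntGrid.stepSum_crossesBelow_add_snd hw
  · have e : toIntPoint u = ((w.1 : ℤ), (w.2 : ℤ) + 1) := by
      simp only [toIntPoint, Prod.mk.injEq]; omega
    rw [e] at hu ⊢
    exact (IntGrid.stepSum_crossesBelow_add_snd hu).symm
  · have e : toIntPoint w = ((u.1 : ℤ) + 1, (u.2 : ℤ)) := by
      simp only [toIntPoint, Prod.mk.injEq]; omega
    rw [e] at hw ⊢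
    exact IntGrid.stepSum_crossesBelow_add_fst hl hw (by omega) (by omega)
  · have e : toIntPoint u = ((w.1 : ℤ) + 1, (w.2 : ℤ)) := by
      simp only [toIntPoint, Prod.mk.injEq]; omega
    rw [e] at hu ⊢
    exact (IntGrid.stepSum_crossesBelow_add_fst hl hu (by omega) (by omega)).symm

end Grid

theorem full_component_unique_side_general {N : ℕ} (S' P' : Finset (GridV N))
    (hdisj : Disjoint S' P')
    (C : Finset (GridV N)) (hC : IsComponent S' C) (hfull : FullBoundingRect C) :
    ∀ D : Finset (GridV N), IsComponent P' D → ¬ FullBoundingRect D := by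
  intro D hD hDfull
  obtain ⟨⟨vL, hvL, hvL0⟩, ⟨vR, hvR, hvR1⟩, -, -⟩ := hfull
  obtain ⟨-, -, ⟨wB, hwB, hwB0⟩, ⟨wT, hwT, hwT1⟩⟩ := hDfull
  obtain ⟨l, hl, hlast, hlS⟩ := hC.exists_isChain hvR hvL
  obtain ⟨a, t, hγ, ha, hγlast, hrows, hpts⟩ := exists_intGrid_walk hl hvR1 (hlast ▸ hvL0)
  have hoff : ∀ v ∈ P', toIntPoint v ∉ a :: t := fun v hv hmem =>
    Finset.disjoint_left.1 hdisj (hlS v (hpts v hmem)) hv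
  have hconst := hD.apply_eq_apply
    (f := fun v => List.stepSum (IntGrid.crossesBelow (toIntPoint v)) (a :: t))
    (fun p hp q hq hpq =>
      stepSum_crossesBelow_toIntPoint_eq hγ ha hγlast hpq (hoff p hp) (hoff q hq))
    hwB hwT
  have hwT_lt := wT.1.isLt
  have hbottom := IntGrid.stepSum_crossesBelow_eq_zero (hoff wB (hD.subset hwB))
    fun p hp => by simp only [toIntPoint, hwB0]; exact_mod_cast (hrows p hp).1
  have htop := IntGrid.stepSum_crossesBelow_eq_one (z := toIntPoint wT) hγ
    (fun p hp => by have := hrows p hp; simp only [toIntPoint, hwT1]; omega)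
    (by simp only [toIntPoint, ha]; omega) (by simp only [toIntPoint, hγlast]; omega)
  exact zero_ne_one (hbottom.symm.trans (hconst.trans htop))

/-- Let `S'` and `P'` be disjoint subsets of the grid with union the whole grid. If some
connected component of `S'` has bounding rectangle equal to the whole grid, then no connected
component of `P'` has bounding rectangle equal to the whole grid. -/
theorem full_component_unique_side {N : ℕ} (hN : 1 ≤ N) (S' P' : Finset (GridV N))
    (hdisj : Disjoint S' P') (huniv : S' ∪ P' = Finset.univ)
    (C : Finset (GridV N)) (hC : IsComponent S' C) (hfull : FullBoundingRect C) :
    ∀ D : Finset (GridV N), IsComponent P' D → ¬ FullBoundingRect D :=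
  full_component_unique_side_general S' P' hdisj C hC hfull
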